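/- arXiv:2211.05665 — 7 statements merged into one kernel-verified Lean document; each statement's English description precedes it below -/
import Mathlib

section
/- Erdős–Dushnik–Miller theorem (EDM): Let V be an uncountable set (there is no injection from V into ℕ) and let f be a function assigning to each 2-element subset of V a color in {0,1}. Then either there exists an uncountable subset S of V such that f({x,y}) = 0 for all distinct x, y ∈ S, or there exists a countably infinite subset S of V such that f({x,y}) = 1 for all distinct x, y ∈ S. -/
private lemma fin2_ne_zero {a : Fin 2} (h : a ≠ 0) : a = 1 := by
  omega

/-- Key lemma: if there is no uncountable 0-homogeneous set, then every uncountable set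
contains a point whose 1-neighborhood within the set is uncountable. -/
private lemma edm_key {V : Type*} (f : Sym2 V → Fin 2)
    (h0 : ¬ ∃ S : Set V, ¬ S.Countable ∧ ∀ x ∈ S, ∀ y ∈ S, x ≠ y → f s(x, y) = 0)
    (A : Set V) (hA : ¬ A.Countable) :
    ∃ x ∈ A, ¬ {y ∈ A | y ≠ x ∧ f s(x, y) = 1}.Countable := by
  by_contra hcon
  push_neg at hcon
  -- every point's 1-neighborhood within A is countable; build a maximal 0-homog set via Zorn
  obtain ⟨S, hS⟩ := zorn_subset
      {S : Set V | S ⊆ A ∧ ∀ x ∈ S, ∀ y ∈ S, x ≠ y → f s(x, y) = 0}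
      (fun c hc hchain => by
        refine ⟨⋃₀ c, ⟨?_, ?_⟩, fun s hs => Set.subset_sUnion_of_mem hs⟩
        · exact Set.sUnion_subset fun s hs => (hc hs).1
        · rintro x ⟨s, hs, hxs⟩ y ⟨t, ht, hyt⟩ hxy
          rcases hchain.total hs ht with h | h
          · exact (hc ht).2 x (h hxs) y hyt hxy
          · exact (hc hs).2 x hxs y (h hyt) hxy)
  obtain ⟨⟨hSA, hShom⟩, hSmax⟩ := hS
  have hScount : S.Countable := by
    by_contra hSc
    exact h0 ⟨S, hSc, hShom⟩
  -- A is covered by S and the 1-neighborhoods of points of S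
  have hcover : A ⊆ S ∪ ⋃ x ∈ S, {y ∈ A | y ≠ x ∧ f s(x, y) = 1} := by
    intro y hyA
    by_cases hyS : y ∈ S
    · exact Or.inl hyS
    right
    -- S ∪ {y} is not 0-homogeneous by maximality
    have : ¬ (insert y S ⊆ A ∧ ∀ a ∈ insert y S, ∀ b ∈ insert y S, a ≠ b → f s(a, b) = 0) := by
      intro hmem
      have := hSmax hmem (Set.subset_insert y S)
      exact hyS (this (Set.mem_insert y S))
    push_neg at this
    obtain ⟨a, ha, b, hb, hab, hfab⟩ := this (Set.insert_subset hyA hSA)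
    have hfab1 : f s(a, b) = 1 := fin2_ne_zero hfab
    rcases ha with ha | ha <;> rcases hb with hb | hb
    · exact absurd (ha.trans hb.symm) hab
    · subst ha
      refine Set.mem_biUnion hb ⟨hyA, hab.symm ∘ Eq.symm, ?_⟩
      rwa [Sym2.eq_swap]
    · subst hb
      exact Set.mem_biUnion ha ⟨hyA, fun h => hab h.symm, hfab1⟩
    · exact absurd (hShom a ha b hb hab) hfab
  exact hA ((hScount.union (hScount.biUnion fun x hx => hcon x (hSA hx))).mono hcover)

/-- Erdős–Dushnik–Miller theorem (EDM): if `V` is uncountable (no injection into `ℕ`)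
and `f` colors the 2-element subsets of `V` with colors `0, 1`, then either there is an
uncountable subset monochromatic in color `0`, or a countably infinite subset
monochromatic in color `1`. -/
theorem edm {V : Type*} (hV : ¬ Countable V) (f : Sym2 V → Fin 2) :
    (∃ S : Set V, ¬ S.Countable ∧ ∀ x ∈ S, ∀ y ∈ S, x ≠ y → f s(x, y) = 0) ∨
    (∃ S : Set V, S.Countable ∧ S.Infinite ∧ ∀ x ∈ S, ∀ y ∈ S, x ≠ y → f s(x, y) = 1) := by
  by_cases h0 : ∃ S : Set V, ¬ S.Countable ∧ ∀ x ∈ S, ∀ y ∈ S, x ≠ y → f s(x, y) = 0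
  · exact Or.inl h0
  right
  have key := edm_key f h0
  -- step function on uncountable sets
  let F : {A : Set V // ¬ A.Countable} → V × {A : Set V // ¬ A.Countable} :=
    fun A =>
      let x := (key A.1 A.2).choose
      ⟨x, ⟨{y ∈ A.1 | y ≠ x ∧ f s(x, y) = 1}, (key A.1 A.2).choose_spec.2⟩⟩
  have hunivc : ¬ (Set.univ : Set V).Countable := by
    rwa [Set.countable_univ_iff]
  let seq : ℕ → {A : Set V // ¬ A.Countable} :=
    fun n => Nat.rec ⟨Set.univ, hunivc⟩ (fun _ A => (F A).2) n
  let x : ℕ → V := fun n => (F (seq n)).1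
  have hsucc : ∀ n, (seq (n + 1)).1 = {y ∈ (seq n).1 | y ≠ x n ∧ f s(x n, y) = 1} :=
    fun n => rfl
  have hxmem : ∀ n, x n ∈ (seq n).1 := fun n => (key (seq n).1 (seq n).2).choose_spec.1
  have hmono : ∀ n m, n ≤ m → (seq m).1 ⊆ (seq n).1 := by
    intro n m hnm
    induction m with
    | zero => cases Nat.le_zero.mp hnm; exact fun _ h => h
    | succ k ih =>
      rcases Nat.lt_or_ge n (k + 1) with h | h
      · intro y hy
        rw [hsucc k] at hy
        exact ih (Nat.lt_succ_iff.mp h) hy.1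
      · cases Nat.le_antisymm hnm h; exact fun _ h => h
  have hedge : ∀ n m, n < m → x m ≠ x n ∧ f s(x n, x m) = 1 := by
    intro n m hnm
    have : x m ∈ (seq (n + 1)).1 := hmono (n + 1) m hnm (hxmem m)
    rw [hsucc n] at this
    exact ⟨this.2.1, this.2.2⟩
  have hinj : Function.Injective x := by
    intro n m hnm
    by_contra h
    rcases Nat.lt_or_ge n m with hlt | hge
    · exact (hedge n m hlt).1 hnm.symm
    · exact (hedge m n (Nat.lt_of_le_of_ne hge (Ne.symm h))).1 hnm
  refine ⟨Set.range x, Set.countable_range x, Set.infinite_range_of_injective hinj, ?_⟩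
  rintro a ⟨n, rfl⟩ b ⟨m, rfl⟩ hab
  rcases Nat.lt_or_ge n m with h | h
  · exact (hedge n m h).2
  · have hlt : m < n := Nat.lt_of_le_of_ne h (fun e => hab (by rw [e]))
    rw [Sym2.eq_swap]
    exact (hedge m n hlt).2
end

section
/- (CAC^ℵ0) Every partially ordered set all of whose chains are finite and all of whose antichains are countable is countable. -/
/-- (CAC^ℵ₀) Every partially ordered set all of whose chains are finite and all of whose
antichains are countable is countable. -/
theorem cac_aleph0 {P : Type*} [PartialOrder P]
    (hchain : ∀ C : Set P, IsChain (· ≤ ·) C → C.Finite)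
    (hantichain : ∀ A : Set P, IsAntichain (· ≤ ·) A → A.Countable) :
    Countable P := by
  classical
  -- < is well-founded: an infinite descending sequence would be an infinite chain
  have wf : WellFounded ((· < ·) : P → P → Prop) := by
    rw [RelEmbedding.wellFounded_iff_isEmpty]
    constructor
    intro f
    have hanti : StrictAnti (f : ℕ → P) := fun a b h => f.map_rel_iff.2 h
    have hc : IsChain (· ≤ ·) (Set.range (f : ℕ → P)) := by
      rintro _ ⟨a, rfl⟩ _ ⟨b, rfl⟩ _
      rcases le_total a b with h | h
      · exact Or.inr (hanti.antitone h)
      · exact Or.inl (hanti.antitone h)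
    have hfin := hchain _ hc
    exact Set.infinite_range_of_injective hanti.injective hfin
  -- key lemma: an uncountable set has an element with uncountably many things above it
  have key : ∀ S : Set P, ¬S.Countable → ∃ m ∈ S, ¬(S ∩ Set.Ioi m).Countable := by
    intro S hS
    by_contra h
    push_neg at h
    set M : Set P := {m ∈ S | ∀ x ∈ S, x < m → False} with hM
    have hMantichain : IsAntichain (· ≤ ·) M := by
      rintro a ⟨ha, hamin⟩ b ⟨hb, hbmin⟩ hab hle
      exact hbmin a ha (lt_of_le_of_ne hle hab)
    have hMcount : M.Countable := hantichain M hMantichain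
    have hcover : S ⊆ ⋃ m ∈ M, ({m} ∪ (S ∩ Set.Ioi m)) := by
      intro s hs
      obtain ⟨m, hmT, hmmin⟩ := wf.has_min {x ∈ S | x ≤ s} ⟨s, hs, le_rfl⟩
      have hmM : m ∈ M := ⟨hmT.1, fun x hx hxm => hmmin x ⟨hx, hxm.le.trans hmT.2⟩ hxm⟩
      rcases eq_or_lt_of_le hmT.2 with h' | h'
      · exact Set.mem_biUnion hmM (Or.inl h'.symm)
      · exact Set.mem_biUnion hmM (Or.inr ⟨hs, h'⟩)
    have : S.Countable := by
      refine Set.Countable.mono hcover ?_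
      exact Set.Countable.biUnion hMcount fun m hm =>
        (Set.countable_singleton m).union (h m hm.1)
    exact hS this
  -- now build an infinite ascending chain if P is uncountable
  by_contra hP
  have huniv : ¬(Set.univ : Set P).Countable := by
    rw [Set.countable_univ_iff]
    exact hP
  -- recursively pick sets and elements
  let F : ℕ → {S : Set P // ¬S.Countable} := fun n =>
    Nat.rec ⟨Set.univ, huniv⟩
      (fun _ S => ⟨S.1 ∩ Set.Ioi (key S.1 S.2).choose,
        (key S.1 S.2).choose_spec.2⟩) n
  let m : ℕ → P := fun n => (key (F n).1 (F n).2).choose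
  have hm_mem : ∀ n, m n ∈ (F n).1 := fun n => (key (F n).1 (F n).2).choose_spec.1
  have hmono : StrictMono m := by
    apply strictMono_nat_of_lt_succ
    intro n
    have := hm_mem (n + 1)
    exact this.2
  have hc : IsChain (· ≤ ·) (Set.range m) := by
    rintro _ ⟨a, rfl⟩ _ ⟨b, rfl⟩ _
    rcases le_total a b with h | h
    · exact Or.inl (hmono.monotone h)
    · exact Or.inr (hmono.monotone h)
  exact Set.infinite_range_of_injective hmono.injective (hchain _ hc)
end

section
/- Kurepa's theorem (CAC₁^ℵ0): Every partially ordered set all of whose antichains are finite and all of whose chains are countable is countable. -/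
lemma kurepa_key {P : Type*} [PartialOrder P]
    (hchain : ∀ C : Set P, IsChain (· ≤ ·) C → C.Countable)
    (S : Set P) (hS : ¬ S.Countable) :
    ∃ x ∈ S, ¬ ({y ∈ S | ¬ (x ≤ y ∨ y ≤ x)}).Countable := by
  by_contra hcon
  push_neg at hcon
  -- get a maximal chain contained in S
  have hub : ∀ c ⊆ {C : Set P | C ⊆ S ∧ IsChain (· ≤ ·) C}, IsChain (· ⊆ ·) c →
      ∃ ub ∈ {C : Set P | C ⊆ S ∧ IsChain (· ≤ ·) C}, ∀ s ∈ c, s ⊆ ub := by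
    intro c hcS hc
    refine ⟨⋃₀ c, ⟨?_, ?_⟩, fun s hs => Set.subset_sUnion_of_mem hs⟩
    · exact Set.sUnion_subset fun t ht => (hcS ht).1
    · intro a ha b hb hab
      obtain ⟨A, hA, haA⟩ := ha
      obtain ⟨B, hB, hbB⟩ := hb
      rcases hc.total hA hB with h | h
      · exact (hcS hB).2 (h haA) hbB hab
      · exact (hcS hA).2 haA (h hbB) hab
  obtain ⟨C, hCmax⟩ := zorn_subset {C : Set P | C ⊆ S ∧ IsChain (· ≤ ·) C} hub
  obtain ⟨⟨hCS, hCchain⟩, hmax⟩ := hCmax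
  apply hS
  have hsub : S ⊆ C ∪ ⋃ x ∈ C, {y ∈ S | ¬ (x ≤ y ∨ y ≤ x)} := by
    intro y hy
    by_cases hyC : y ∈ C
    · exact Or.inl hyC
    right
    by_contra hnot
    have hcomp : ∀ b ∈ C, b ≤ y ∨ y ≤ b := by
      intro b hb
      by_contra hbc
      exact hnot (Set.mem_biUnion hb ⟨hy, hbc⟩)
    have hins : insert y C ∈ {C : Set P | C ⊆ S ∧ IsChain (· ≤ ·) C} := by
      constructor
      · exact Set.insert_subset hy hCS
      · apply hCchain.insert
        intro b hb _
        exact (hcomp b hb).symm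
    have := hmax hins (Set.subset_insert y C)
    exact hyC (this (Set.mem_insert y C))
  refine Set.Countable.mono hsub ?_
  refine (hchain C hCchain).union ?_
  exact Set.Countable.biUnion (hchain C hCchain) fun x hx => by simpa only [not_or] using hcon x (hCS hx)

/-- Kurepa's theorem (CAC₁^ℵ₀): Every partially ordered set all of whose antichains are
finite and all of whose chains are countable is countable. -/
theorem cac1_aleph0 {P : Type*} [PartialOrder P]
    (hantichain : ∀ A : Set P, IsAntichain (· ≤ ·) A → A.Finite)
    (hchain : ∀ C : Set P, IsChain (· ≤ ·) C → C.Countable) :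
    Countable P := by
  by_contra hP
  have hU : ¬ (Set.univ : Set P).Countable := by
    rwa [Set.countable_univ_iff]
  choose f hf1 hf2 using kurepa_key hchain
  -- iterate
  let F : {S : Set P // ¬ S.Countable} → {S : Set P // ¬ S.Countable} :=
    fun S => ⟨{y ∈ S.1 | ¬ (f S.1 S.2 ≤ y ∨ y ≤ f S.1 S.2)}, hf2 S.1 S.2⟩
  let T : ℕ → {S : Set P // ¬ S.Countable} := fun n => F^[n] ⟨Set.univ, hU⟩
  let x : ℕ → P := fun n => f (T n).1 (T n).2
  have hT : ∀ n, T (n + 1) = F (T n) := fun n => Function.iterate_succ_apply' F n _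
  have hmono : ∀ n, (T (n + 1)).1 ⊆ (T n).1 := by
    intro n
    rw [hT n]
    exact Set.sep_subset _ _
  have hmem : ∀ m n, m < n → x n ∈ {y ∈ (T m).1 | ¬ (x m ≤ y ∨ y ≤ x m)} := by
    intro m n hmn
    have h1 : x n ∈ (T n).1 := hf1 _ _
    have h2 : ∀ k, m + 1 ≤ k → k ≤ n → x n ∈ (T k).1 := by
      intro k hk1 hk2
      have : ∀ j, x n ∈ (T (n - j)).1 := by
        intro j
        induction j with
        | zero => simpa using h1
        | succ j ih =>
          rcases le_or_gt n (j) with h | h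
          · have e1 : n - (j+1) = 0 := by omega
            have e2 : n - j = 0 := by omega
            rwa [e1, ← e2]
          · have : n - j = (n - (j+1)) + 1 := by omega
            rw [this] at ih
            exact hmono _ ih
      have := this (n - k)
      rwa [Nat.sub_sub_self hk2] at this
    have := h2 (m + 1) le_rfl hmn
    rw [hT m] at this
    exact this
  have hincomp : ∀ m n, m < n → ¬ (x m ≤ x n ∨ x n ≤ x m) := by
    intro m n hmn
    exact (hmem m n hmn).2
  have hinj : Function.Injective x := by
    intro m n hmn
    by_contra hne
    rcases Nat.lt_or_ge m n with h | h
    · exact hincomp m n h (Or.inl (le_of_eq hmn))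
    · exact hincomp n m (by omega) (Or.inl (le_of_eq hmn.symm))
  have hanti : IsAntichain (· ≤ ·) (Set.range x) := by
    rintro _ ⟨m, rfl⟩ _ ⟨n, rfl⟩ hne hle
    rcases Nat.lt_or_ge m n with h | h
    · exact hincomp m n h (Or.inl hle)
    · rcases Nat.lt_or_ge n m with h' | h'
      · exact hincomp n m h' (Or.inr hle)
      · have : m = n := by omega
        exact hne (by rw [this])
  have hfin := hantichain _ hanti
  exact (Set.infinite_range_of_injective hinj) hfin
end

section
/- Every uncountable partially ordered set contains either an uncountable antichain or a countably infinite chain. -/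
private lemma key_lemma {P : Type*} [PartialOrder P]
    (hA : ∀ A : Set P, IsAntichain (· ≤ ·) A → A.Countable)
    {S : Set P} (hS : ¬ S.Countable) :
    ∃ a ∈ S, ¬ {x ∈ S | x < a ∨ a < x}.Countable := by
  obtain ⟨A, hAmax⟩ := zorn_subset {A : Set P | A ⊆ S ∧ IsAntichain (· ≤ ·) A} (by
    intro c hc hchain
    refine ⟨⋃₀ c, ⟨?_, ?_⟩, fun s hs => Set.subset_sUnion_of_mem hs⟩
    · exact Set.sUnion_subset fun s hs => (hc hs).1
    · intro x hx y hy hxy hle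
      obtain ⟨s, hs, hxs⟩ := hx
      obtain ⟨t, ht, hyt⟩ := hy
      rcases hchain.total hs ht with h | h
      · exact (hc ht).2 (h hxs) hyt hxy hle
      · exact (hc hs).2 hxs (h hyt) hxy hle)
  obtain ⟨⟨hAS, hAanti⟩, hmax⟩ := hAmax
  by_contra h
  push_neg at h
  apply hS
  have hAc : A.Countable := hA A hAanti
  have cover : S ⊆ ⋃ a ∈ A, ({x ∈ S | x < a ∨ a < x} ∪ {a}) := by
    intro x hxS
    by_cases hxA : x ∈ A
    · exact Set.mem_biUnion hxA (Or.inr rfl)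
    · have : ¬ IsAntichain (· ≤ ·) (insert x A) := by
        intro hanti
        exact hxA (hmax ⟨Set.insert_subset hxS hAS, hanti⟩
          (Set.subset_insert x A) (Set.mem_insert x A))
      rw [isAntichain_insert] at this
      push_neg at this
      obtain ⟨b, hbA, hneb, hor⟩ := this hAanti
      rcases or_iff_not_imp_left.2 hor with hle | hle
      · exact Set.mem_biUnion hbA (Or.inl ⟨hxS, Or.inl (lt_of_le_of_ne hle hneb)⟩)
      · exact Set.mem_biUnion hbA (Or.inl ⟨hxS, Or.inr (lt_of_le_of_ne hle (Ne.symm hneb))⟩)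
  refine Set.Countable.mono cover (Set.Countable.biUnion hAc fun a ha => ?_)
  exact (h a (hAS ha)).union (Set.countable_singleton a)

/-- Every uncountable partially ordered set contains either an uncountable antichain
or a countably infinite chain. -/
theorem uncountable_poset_antichain_or_chain {P : Type*} [PartialOrder P]
    (hP : ¬ Countable P) :
    (∃ A : Set P, ¬ A.Countable ∧ IsAntichain (· ≤ ·) A) ∨
    (∃ C : Set P, C.Countable ∧ C.Infinite ∧ IsChain (· ≤ ·) C) := by
  by_cases hA : ∀ A : Set P, IsAntichain (· ≤ ·) A → A.Countable
  · right
    have hU : ¬ (Set.univ : Set P).Countable := by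
      rw [Set.countable_univ_iff]; exact hP
    -- step function
    let step : {S : Set P // ¬ S.Countable} → P × {S : Set P // ¬ S.Countable} :=
      fun S => ((key_lemma hA S.2).choose,
        ⟨{x ∈ S.1 | x < (key_lemma hA S.2).choose ∨ (key_lemma hA S.2).choose < x},
          (key_lemma hA S.2).choose_spec.2⟩)
    let t : ℕ → {S : Set P // ¬ S.Countable} :=
      fun n => Nat.rec ⟨Set.univ, hU⟩ (fun _ ih => (step ih).2) n
    let a : ℕ → P := fun n => (step (t n)).1
    have ht : ∀ n, (t (n+1)).1 = {x ∈ (t n).1 | x < a n ∨ a n < x} := fun n => rfl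
    have ha : ∀ n, a n ∈ (t n).1 := fun n => (key_lemma hA (t n).2).choose_spec.1
    have hsub : ∀ m n, m < n → (t n).1 ⊆ (t (m+1)).1 := by
      intro m n hmn
      induction n with
      | zero => omega
      | succ k ih =>
        rcases Nat.lt_succ_iff_lt_or_eq.1 hmn with h | h
        · exact ((ht k) ▸ (Set.sep_subset _ _)).trans (ih h)
        · subst h; rfl
    have hcomp : ∀ m n, m < n → a n < a m ∨ a m < a n := by
      intro m n hmn
      have := hsub m n hmn (ha n)
      rw [ht m] at this
      exact this.2
    have hinj : Function.Injective a := by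
      intro m n hmn
      by_contra hne
      rcases Nat.lt_or_ge m n with h | h
      · rcases hcomp m n h with h' | h' <;> simp [hmn] at h'
      · have h2 : n < m := by omega
        rcases hcomp n m h2 with h' | h' <;> simp [hmn] at h'
    refine ⟨Set.range a, Set.countable_range a, Set.infinite_range_of_injective hinj, ?_⟩
    rintro _ ⟨m, rfl⟩ _ ⟨n, rfl⟩ hne
    rcases lt_trichotomy m n with h | h | h
    · rcases hcomp m n h with h' | h'
      · exact Or.inr h'.le
      · exact Or.inl h'.le
    · exact absurd (congrArg a h) hne
    · rcases hcomp n m h with h' | h'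
      · exact Or.inl h'.le
      · exact Or.inr h'.le
  · left
    push_neg at hA
    obtain ⟨A, hanti, hc⟩ := hA
    exact ⟨A, hc, hanti⟩
end

section
/- Every uncountable partially ordered set contains either an uncountable chain or a countably infinite antichain. -/
open Set

/-- If every chain is countable and `S` is uncountable, then some `c ∈ S` has
uncountably many elements of `S` incomparable to it. -/
lemma key_lemma_s5 {P : Type*} [PartialOrder P]
    (hch : ∀ C : Set P, IsChain (· ≤ ·) C → C.Countable)
    (S : Set P) (hS : ¬ S.Countable) :
    ∃ c ∈ S, ¬ (S ∩ {x | ¬ x ≤ c ∧ ¬ c ≤ x}).Countable := by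
  have hub : ∀ c ⊆ {C : Set P | C ⊆ S ∧ IsChain (· ≤ ·) C}, IsChain (· ⊆ ·) c →
      ∃ ub ∈ {C : Set P | C ⊆ S ∧ IsChain (· ≤ ·) C}, ∀ s ∈ c, s ⊆ ub := by
    intro c hcS hc
    refine ⟨⋃₀ c, ⟨?_, ?_⟩, fun s hs => subset_sUnion_of_mem hs⟩
    · exact sUnion_subset fun t ht => (hcS ht).1
    · intro x hx y hy hxy
      obtain ⟨Cx, hCx, hxCx⟩ := hx
      obtain ⟨Cy, hCy, hyCy⟩ := hy
      rcases hc.total hCx hCy with h | h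
      · exact (hcS hCy).2 (h hxCx) hyCy hxy
      · exact (hcS hCx).2 hxCx (h hyCy) hxy
  obtain ⟨m, hm⟩ := zorn_subset {C : Set P | C ⊆ S ∧ IsChain (· ≤ ·) C} hub
  obtain ⟨⟨hmS, hmchain⟩, hmax⟩ := hm
  by_contra hcon
  push_neg at hcon
  have hcov : S ⊆ m ∪ ⋃ y ∈ m, (S ∩ {x | ¬ x ≤ y ∧ ¬ y ≤ x}) := by
    intro x hx
    by_cases hxm : x ∈ m
    · exact Or.inl hxm
    · have hex : ∃ y ∈ m, ¬ x ≤ y ∧ ¬ y ≤ x := by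
        by_contra hall
        push_neg at hall
        have hall' : ∀ y ∈ m, x ≤ y ∨ y ≤ x := by
          intro y hy
          by_cases h1 : x ≤ y
          · exact Or.inl h1
          · exact Or.inr (hall y hy h1)
        have hins : insert x m ∈ {C : Set P | C ⊆ S ∧ IsChain (· ≤ ·) C} :=
          ⟨insert_subset hx hmS, hmchain.insert fun b hb _ => hall' b hb⟩
        have : insert x m ⊆ m := hmax hins (subset_insert x m)
        exact hxm (this (mem_insert x m))
      obtain ⟨y, hym, h1, h2⟩ := hex
      exact Or.inr (mem_biUnion hym ⟨hx, h1, h2⟩)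
  have hmc : m.Countable := hch m hmchain
  have : S.Countable :=
    Countable.mono hcov (hmc.union (hmc.biUnion fun y hy => hcon y (hmS hy)))
  exact hS this

/-- Every uncountable partially ordered set contains either an uncountable chain
or a countably infinite antichain. -/
theorem uncountable_poset_chain_or_antichain {P : Type*} [PartialOrder P]
    (hP : ¬ Countable P) :
    (∃ C : Set P, ¬ C.Countable ∧ IsChain (· ≤ ·) C) ∨
    (∃ A : Set P, A.Countable ∧ A.Infinite ∧ IsAntichain (· ≤ ·) A) := by
  by_contra h
  push_neg at h
  obtain ⟨h1, h2⟩ := h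
  have hch : ∀ C : Set P, IsChain (· ≤ ·) C → C.Countable := by
    intro C hC
    by_contra hc
    exact h1 C hc hC
  have huniv : ¬ (univ : Set P).Countable := by
    rw [countable_univ_iff]
    exact hP
  have step : ∀ S : {S : Set P // ¬ S.Countable},
      ∃ c, c ∈ S.1 ∧ ¬ (S.1 ∩ {x | ¬ x ≤ c ∧ ¬ c ≤ x}).Countable := by
    intro S
    obtain ⟨c, hc1, hc2⟩ := key_lemma_s5 hch S.1 S.2
    exact ⟨c, hc1, hc2⟩
  choose f hf1 hf2 using step
  let g : ℕ → {S : Set P // ¬ S.Countable} := fun n =>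
    Nat.rec ⟨univ, huniv⟩
      (fun _ S => ⟨S.1 ∩ {x | ¬ x ≤ f S ∧ ¬ f S ≤ x}, hf2 S⟩) n
  let c : ℕ → P := fun n => f (g n)
  have hmono : ∀ n m : ℕ, n ≤ m → (g m).1 ⊆ (g n).1 := by
    intro n m hle
    induction hle with
    | refl => exact subset_rfl
    | step h ih => exact fun x hx => ih hx.1
  have hinc : ∀ n m : ℕ, n < m → ¬ c m ≤ c n ∧ ¬ c n ≤ c m := by
    intro n m hlt
    have h1 : c m ∈ (g m).1 := hf1 _
    have h2 : c m ∈ (g (n + 1)).1 := hmono _ _ hlt h1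
    exact h2.2
  have hinj : Function.Injective c := by
    intro n m hnm
    by_contra hne
    rcases Nat.lt_or_ge n m with h | h
    · exact (hinc n m h).2 (le_of_eq hnm)
    · exact (hinc m n (lt_of_le_of_ne h (Ne.symm hne))).2 (le_of_eq hnm.symm)
  have hanti : IsAntichain (· ≤ ·) (range c) := by
    rintro _ ⟨n, rfl⟩ _ ⟨m, rfl⟩ hne hle
    have hnm : n ≠ m := fun h => hne (by rw [h])
    rcases Nat.lt_or_ge n m with h | h
    · exact (hinc n m h).2 hle
    · exact (hinc m n (lt_of_le_of_ne h (Ne.symm hnm))).1 hle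
  exact h2 (range c) (countable_range c) (infinite_range_of_injective hinj) hanti
end

section
/- Dushnik–Miller theorem: Let κ be an uncountable cardinal and let f be a function assigning to each 2-element subset of a set V of cardinality κ a color in {0,1}. Then either there exists a subset H of V with |H| = κ such that f({x,y}) = 0 for all distinct x, y ∈ H, or there exists a countably infinite subset H of V such that f({x,y}) = 1 for all distinct x, y ∈ H. -/
universe u

open Cardinal Set

namespace DushnikMillerAux

attribute [local instance] Classical.propDecidable

instance (o : Ordinal.{u}) : IsWellOrder o.ToType (· < ·) := isWellOrder_lt


variable {V : Type u}

/-- the color-1 neighborhood of `x` -/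
def N1 (f : Sym2 V → Fin 2) (x : V) : Set V := {y | y ≠ x ∧ f s(x, y) = 1}

lemma fin2_eq_zero {a : Fin 2} (h : a ≠ 1) : a = 0 := by fin_cases a <;> simp_all

lemma eq_zero_of_not_mem_N1 {f : Sym2 V → Fin 2} {x y : V} (h : y ∉ N1 f x) (hne : y ≠ x) :
    f s(x, y) = 0 := fin2_eq_zero fun h1 => h ⟨hne, h1⟩

/-- Ramsey-style reduction: if there is no countably infinite 1-homogeneous set, then every
set `A` has a full-size subset `B` all of whose 1-degrees inside `B` are `< #A`. -/
lemma exists_small_degree (f : Sym2 V → Fin 2)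
    (hNo : ¬ ∃ H : Set V, H.Countable ∧ H.Infinite ∧
      ∀ x ∈ H, ∀ y ∈ H, x ≠ y → f s(x, y) = 1) (A : Set V) :
    ∃ B ⊆ A, #B = #A ∧ ∀ x ∈ B, #(↥(B ∩ N1 f x)) < #A := by
  by_contra hc
  push_neg at hc
  have H : ∀ B : {B : Set V // B ⊆ A ∧ #↥B = #↥A},
      ∃ x, x ∈ B.1 ∧ #(↥(B.1 ∩ N1 f x)) = #↥A := by
    rintro ⟨B, hBA, hBcard⟩
    obtain ⟨x, hxB, hge⟩ := hc B hBA hBcard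
    exact ⟨x, hxB, le_antisymm (mk_le_mk_of_subset fun y hy => hBA hy.1) hge⟩
  let step : {B : Set V // B ⊆ A ∧ #↥B = #↥A} → {B : Set V // B ⊆ A ∧ #↥B = #↥A} :=
    fun B => ⟨B.1 ∩ N1 f (H B).choose, fun y hy => B.2.1 hy.1, (H B).choose_spec.2⟩
  let g : ℕ → {B : Set V // B ⊆ A ∧ #↥B = #↥A} :=
    fun n => Nat.rec ⟨A, subset_rfl, rfl⟩ (fun _ B => step B) n
  let x : ℕ → V := fun n => (H (g n)).choose
  have hxg : ∀ n, x n ∈ (g n).1 := fun n => (H (g n)).choose_spec.1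
  have hsucc : ∀ n, (g (n + 1)).1 = (g n).1 ∩ N1 f (x n) := fun n => rfl
  have hmono : ∀ n k, (g (n + k)).1 ⊆ (g n).1 := by
    intro n k
    induction k with
    | zero => exact subset_rfl
    | succ k ih =>
      have : (g (n + (k + 1))).1 = (g (n + k)).1 ∩ N1 f (x (n + k)) := hsucc _
      rw [this]
      exact inter_subset_left.trans ih
  have key : ∀ m n, m < n → x n ∈ N1 f (x m) := by
    intro m n h
    obtain ⟨k, rfl⟩ := Nat.exists_eq_add_of_le h
    have h1 : (g (m + 1 + k)).1 ⊆ (g (m + 1)).1 := hmono _ _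
    have h2 : (g (m + 1)).1 ⊆ N1 f (x m) := by rw [hsucc m]; exact inter_subset_right
    exact h2 (h1 (hxg _))
  have hinj : Function.Injective x := by
    intro m n hmn
    by_contra hne
    rcases Nat.lt_or_ge m n with h | h
    · exact (key m n h).1 hmn.symm
    · exact (key n m (lt_of_le_of_ne h (Ne.symm hne))).1 hmn
  refine hNo ⟨Set.range x, countable_range x, infinite_range_of_injective hinj, ?_⟩
  rintro _ ⟨m, rfl⟩ _ ⟨n, rfl⟩ hne
  have hmn : m ≠ n := fun h => hne (by rw [h])
  rcases Nat.lt_or_ge m n with h | h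
  · exact (key m n h).2
  · rw [Sym2.eq_swap]
    exact (key n m (lt_of_le_of_ne h (Ne.symm hmn))).2

/-- Zorn step: a set of regular size with all internal 1-degrees small has a full-size
0-homogeneous subset. -/
lemma zorn_step (f : Sym2 V → Fin 2) {μ : Cardinal.{u}} (hμ : μ.IsRegular) (A : Set V)
    (hA : #A = μ) (hdeg : ∀ x ∈ A, #(↥(A ∩ N1 f x)) < μ) :
    ∃ H ⊆ A, #H = μ ∧ ∀ x ∈ H, ∀ y ∈ H, x ≠ y → f s(x, y) = 0 := by
  have hch : ∀ c ⊆ {H : Set V | H ⊆ A ∧ ∀ x ∈ H, ∀ y ∈ H, x ≠ y → f s(x, y) = 0},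
      IsChain (· ⊆ ·) c → ∃ ub ∈ {H : Set V | H ⊆ A ∧ ∀ x ∈ H, ∀ y ∈ H, x ≠ y → f s(x, y) = 0},
        ∀ s ∈ c, s ⊆ ub := by
    intro c hcS hchain
    rcases c.eq_empty_or_nonempty with rfl | hcne
    · exact ⟨∅, ⟨empty_subset _, fun x hx => absurd hx (notMem_empty x)⟩,
        fun s hs => absurd hs (notMem_empty s)⟩
    refine ⟨⋃₀ c, ⟨sUnion_subset fun s hs => (hcS hs).1, ?_⟩, fun s hs => subset_sUnion_of_mem hs⟩
    rintro u ⟨s1, hs1, hu⟩ v ⟨s2, hs2, hv⟩ huv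
    rcases eq_or_ne s1 s2 with rfl | hne
    · exact (hcS hs1).2 u hu v hv huv
    rcases hchain hs1 hs2 hne with h | h
    · exact (hcS hs2).2 u (h hu) v hv huv
    · exact (hcS hs1).2 u hu v (h hv) huv
  obtain ⟨H, ⟨hHA, hH0⟩, hmax⟩ :=
    zorn_subset {H : Set V | H ⊆ A ∧ ∀ x ∈ H, ∀ y ∈ H, x ≠ y → f s(x, y) = 0} hch
  refine ⟨H, hHA, ?_, hH0⟩
  by_contra hne
  have hlt : #H < μ := lt_of_le_of_ne (hA ▸ mk_le_mk_of_subset hHA) hne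
  have hcover : A ⊆ H ∪ ⋃ h ∈ H, (A ∩ N1 f h) := by
    intro a ha
    by_contra hcov
    rw [mem_union] at hcov
    push_neg at hcov
    obtain ⟨haH, haN⟩ := hcov
    have hins : insert a H ∈
        {H : Set V | H ⊆ A ∧ ∀ x ∈ H, ∀ y ∈ H, x ≠ y → f s(x, y) = 0} := by
      constructor
      · exact insert_subset ha hHA
      · intro u hu v hv huv
        rcases hu with rfl | hu <;> rcases hv with rfl | hv
        · exact absurd rfl huv
        · have hvN : u ∉ N1 f v := by
            intro hN
            exact haN (mem_biUnion hv ⟨ha, hN⟩)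
          rw [Sym2.eq_swap]
          exact eq_zero_of_not_mem_N1 hvN huv
        · have hvN : v ∉ N1 f u := by
            intro hN
            exact haN (mem_biUnion hu ⟨ha, hN⟩)
          exact eq_zero_of_not_mem_N1 hvN huv.symm
        · exact hH0 u hu v hv huv
    exact haH (hmax hins (subset_insert a H) (mem_insert a H))
  have h2 : #(↥(⋃ h ∈ H, (A ∩ N1 f h))) < μ := by
    calc #(↥(⋃ h ∈ H, (A ∩ N1 f h))) ≤ #H * ⨆ h : H, #(↥(A ∩ N1 f h.1)) :=
          mk_biUnion_le _ _
      _ < μ := mul_lt_of_lt hμ.aleph0_le hlt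
          (Ordinal.iSup_lt (by rwa [hμ.cof_eq]) fun h => hdeg h.1 (hHA h.2))
  have h3 : μ ≤ #H + #(↥(⋃ h ∈ H, (A ∩ N1 f h))) :=
    le_trans (hA ▸ mk_le_mk_of_subset hcover) (mk_union_le _ _)
  exact absurd h3 (not_le.mpr (add_lt_of_lt hμ.aleph0_le hlt h2))

/-- Dushnik–Miller for sets of regular size (assuming no infinite 1-homogeneous set). -/
lemma regular_dm (f : Sym2 V → Fin 2)
    (hNo : ¬ ∃ H : Set V, H.Countable ∧ H.Infinite ∧
      ∀ x ∈ H, ∀ y ∈ H, x ≠ y → f s(x, y) = 1)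
    {μ : Cardinal.{u}} (hμ : μ.IsRegular) (A : Set V) (hA : #A = μ) :
    ∃ H ⊆ A, #H = μ ∧ ∀ x ∈ H, ∀ y ∈ H, x ≠ y → f s(x, y) = 0 := by
  obtain ⟨B, hBA, hBcard, hBdeg⟩ := exists_small_degree f hNo A
  rw [hA] at hBcard hBdeg
  obtain ⟨H, hHB, hHcard, hH0⟩ := zorn_step f hμ B hBcard hBdeg
  exact ⟨H, hHB.trans hBA, hHcard, hH0⟩


variable {V : Type u}


/-- the `B`-neighborhood of a set -/
def nbhd (f : Sym2 V → Fin 2) (B : Set V) (P : Set V) : Set V := ⋃ y ∈ P, (B ∩ N1 f y)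

/-- which sets are acceptable at stage `o` given the union `prev` of the earlier stages -/
def Good (f : Sym2 V → Fin 2) (B : Set V) (t : Ordinal.{u} → Cardinal.{u}) (κ : Cardinal.{u})
    (o : Ordinal.{u}) (prev s : Set V) : Prop :=
  s ⊆ B ∧ Disjoint s (prev ∪ nbhd f B prev) ∧
    (∀ x ∈ s, ∀ y ∈ s, x ≠ y → f s(x, y) = 0) ∧ t o ≤ #s ∧ #s < κ ∧
    ∃ c < κ, ∀ x ∈ s, #(↥(B ∩ N1 f x)) ≤ c

noncomputable def stage (f : Sym2 V → Fin 2) (B : Set V) (t : Ordinal.{u} → Cardinal.{u})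
    (κ : Cardinal.{u}) : Ordinal.{u} → Set V :=
  WellFounded.fix Ordinal.lt_wf fun o ih =>
    if h : ∃ s : Set V, Good f B t κ o (⋃ o' : {o' : Ordinal.{u} // o' < o}, ih o'.1 o'.2) s
    then h.choose else ∅

/-- union of all stages before `o` -/
def stageU (f : Sym2 V → Fin 2) (B : Set V) (t : Ordinal.{u} → Cardinal.{u})
    (κ : Cardinal.{u}) (o : Ordinal.{u}) : Set V :=
  ⋃ o' : {o' : Ordinal.{u} // o' < o}, stage f B t κ o'.1

lemma stage_eq (f : Sym2 V → Fin 2) (B : Set V) (t : Ordinal.{u} → Cardinal.{u})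
    (κ : Cardinal.{u}) (o : Ordinal.{u}) :
    stage f B t κ o =
      if h : ∃ s : Set V, Good f B t κ o (stageU f B t κ o) s then h.choose else ∅ :=
  WellFounded.fix_eq _ _ o

lemma mem_stageU {f : Sym2 V → Fin 2} {B : Set V} {t : Ordinal.{u} → Cardinal.{u}}
    {κ : Cardinal.{u}} {o : Ordinal.{u}} {x : V} :
    x ∈ stageU f B t κ o ↔ ∃ o' < o, x ∈ stage f B t κ o' := by
  simp only [stageU, mem_iUnion, Subtype.exists]
  exact ⟨fun ⟨o', h, hx⟩ => ⟨o', h, hx⟩, fun ⟨o', h, hx⟩ => ⟨o', h, hx⟩⟩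

lemma stageU_eq_small (f : Sym2 V → Fin 2) (B : Set V) (t : Ordinal.{u} → Cardinal.{u})
    (κ : Cardinal.{u}) (o : Ordinal.{u}) :
    stageU f B t κ o =
      ⋃ i : o.ToType, stage f B t κ (Ordinal.typein (· < · : o.ToType → o.ToType → Prop) i) := by
  ext x
  simp only [mem_stageU, mem_iUnion]
  constructor
  · rintro ⟨o', ho', hx⟩
    refine ⟨Ordinal.enum (α := o.ToType) (· < ·) ⟨o', by rw [Set.mem_Iio, Ordinal.type_toType]; exact ho'⟩, ?_⟩
    erw [Ordinal.typein_enum]; exact hx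
  · rintro ⟨i, hx⟩
    exact ⟨_, Ordinal.typein_lt_self i, hx⟩

lemma fin2_eq_one {a : Fin 2} (h : a ≠ 0) : a = 1 := by fin_cases a <;> simp_all

lemma mk_nbhd_lt (f : Sym2 V → Fin 2) (B : Set V) {κ : Cardinal.{u}} (hκ : ℵ₀ ≤ κ)
    {s : Set V} {c : Cardinal.{u}} (hs : #s < κ) (hc : c < κ)
    (hb : ∀ x ∈ s, #(↥(B ∩ N1 f x)) ≤ c) : #(↥(nbhd f B s)) < κ := by
  rcases isEmpty_or_nonempty ↥s with he | hne
  · have hse : s = ∅ := isEmpty_coe_sort.mp he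
    have : nbhd f B s = ∅ := by simp [nbhd, hse]
    rw [this]
    simpa using lt_of_lt_of_le aleph0_pos hκ
  · have h1 : #(↥(nbhd f B s)) ≤ #s * ⨆ y : s, #(↥(B ∩ N1 f y.1)) := mk_biUnion_le _ _
    have h2 : (⨆ y : s, #(↥(B ∩ N1 f y.1))) ≤ c := ciSup_le' fun y => hb y.1 y.2
    exact lt_of_le_of_lt (h1.trans (mul_le_mul_right h2 _)) (mul_lt_of_lt hκ hs hc)

lemma nbhd_stageU (f : Sym2 V → Fin 2) (B : Set V) (t : Ordinal.{u} → Cardinal.{u})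
    (κ : Cardinal.{u}) (o : Ordinal.{u}) :
    nbhd f B (stageU f B t κ o) =
      ⋃ i : o.ToType, nbhd f B (stage f B t κ
        (Ordinal.typein (· < · : o.ToType → o.ToType → Prop) i)) := by
  rw [stageU_eq_small]
  simp only [nbhd, biUnion_iUnion]

lemma exists_good (f : Sym2 V → Fin 2)
    (hNo : ¬ ∃ H : Set V, H.Countable ∧ H.Infinite ∧
      ∀ x ∈ H, ∀ y ∈ H, x ≠ y → f s(x, y) = 1)
    {κ : Cardinal.{u}} (hκ : ℵ₀ < κ)
    (hsucc : ∀ c < κ, Order.succ (c ⊔ ℵ₀) < κ)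
    {B : Set V} (hB : #B = κ) (hdeg : ∀ x ∈ B, #(↥(B ∩ N1 f x)) < κ)
    {t : Ordinal.{u} → Cardinal.{u}} {lam : Cardinal.{u}} (hlam : lam < κ) (hlam0 : lam ≠ 0)
    (ht_lt : ∀ o, t o < κ) (ht_cof : ∀ c < κ, ∃ o < lam.ord, c ≤ t o)
    {prev : Set V} (hprev : #prev < κ) (hprevn : #(↥(nbhd f B prev)) < κ) (o : Ordinal.{u}) :
    ∃ s : Set V, Good f B t κ o prev s := by
  have hκ0 : ℵ₀ ≤ κ := hκ.le
  have hEcard : #(↥(prev ∪ nbhd f B prev)) < κ :=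
    (mk_union_le _ _).trans_lt (add_lt_of_lt hκ0 hprev hprevn)
  have hAv : κ ≤ #(↥(B \ (prev ∪ nbhd f B prev))) := by
    by_contra h
    push_neg at h
    have hBsub : B ⊆ (B \ (prev ∪ nbhd f B prev)) ∪ (prev ∪ nbhd f B prev) := fun x hx =>
      (em (x ∈ prev ∪ nbhd f B prev)).elim (fun hh => Or.inr hh) (fun hh => Or.inl ⟨hx, hh⟩)
    have h2 : κ ≤ #(↥(B \ (prev ∪ nbhd f B prev))) + #(↥(prev ∪ nbhd f B prev)) :=
      le_trans (hB ▸ mk_le_mk_of_subset hBsub) (mk_union_le _ _)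
    exact absurd h2 (not_le.mpr (add_lt_of_lt hκ0 h hEcard))
  have hμreg : Cardinal.IsRegular (Order.succ (t o ⊔ ℵ₀)) := isRegular_succ le_sup_right
  have hμκ : Order.succ (t o ⊔ ℵ₀) < κ := hsucc (t o) (ht_lt o)
  have hGex : ∃ c < κ, Order.succ (t o ⊔ ℵ₀) ≤
      #(↥{x ∈ B \ (prev ∪ nbhd f B prev) | #(↥(B ∩ N1 f x)) ≤ c}) := by
    by_contra hG
    push_neg at hG
    haveI : Nonempty lam.ord.ToType := by
      rw [Ordinal.nonempty_toType_iff]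
      simpa using hlam0
    have hcover : B \ (prev ∪ nbhd f B prev) ⊆ ⋃ i : lam.ord.ToType,
        {x ∈ B \ (prev ∪ nbhd f B prev) |
          #(↥(B ∩ N1 f x)) ≤ t (Ordinal.typein (· < · : lam.ord.ToType → lam.ord.ToType → Prop) i)} := by
      intro x hx
      obtain ⟨o', ho', hto'⟩ := ht_cof (#(↥(B ∩ N1 f x))) (hdeg x hx.1)
      refine mem_iUnion.mpr ⟨Ordinal.enum (· < · : lam.ord.ToType → lam.ord.ToType → Prop)
        ⟨o', by rw [Set.mem_Iio, Ordinal.type_toType]; exact ho'⟩, ?_⟩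
      erw [Ordinal.typein_enum]
      exact ⟨hx, hto'⟩
    have hle : κ ≤ #(lam.ord.ToType) * ⨆ i : lam.ord.ToType,
        #(↥{x ∈ B \ (prev ∪ nbhd f B prev) |
          #(↥(B ∩ N1 f x)) ≤ t (Ordinal.typein (· < · : lam.ord.ToType → lam.ord.ToType → Prop) i)}) :=
      (hAv.trans (mk_le_mk_of_subset hcover)).trans (mk_iUnion_le _)
    have hlamc : #(lam.ord.ToType) = lam := by rw [Cardinal.mk_toType, Cardinal.card_ord]
    have hsup : (⨆ i : lam.ord.ToType,
        #(↥{x ∈ B \ (prev ∪ nbhd f B prev) |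
          #(↥(B ∩ N1 f x)) ≤ t (Ordinal.typein (· < · : lam.ord.ToType → lam.ord.ToType → Prop) i)})) ≤ Order.succ (t o ⊔ ℵ₀) :=
      ciSup_le' fun i => (hG _ (ht_lt _)).le
    have : κ ≤ lam * Order.succ (t o ⊔ ℵ₀) :=
      hle.trans (mul_le_mul' hlamc.le hsup)
    exact absurd this (not_le.mpr (mul_lt_of_lt hκ0 hlam hμκ))
  obtain ⟨c, hcκ, hGc⟩ := hGex
  obtain ⟨W, hWsub, hWcard⟩ := le_mk_iff_exists_subset.mp hGc
  obtain ⟨H, hHW, hHcard, hH0⟩ := regular_dm f hNo hμreg W hWcard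
  refine ⟨H, fun x hx => ((hWsub (hHW hx)).1).1, ?_, hH0, ?_, ?_, c, hcκ, ?_⟩
  · rw [disjoint_left]
    intro x hx hxE
    exact ((hWsub (hHW hx)).1).2 hxE
  · rw [hHcard]
    exact le_sup_left.trans (Order.le_succ _)
  · rw [hHcard]
    exact hμκ
  · intro x hx
    exact (hWsub (hHW hx)).2

lemma stage_good (f : Sym2 V → Fin 2)
    (hNo : ¬ ∃ H : Set V, H.Countable ∧ H.Infinite ∧
      ∀ x ∈ H, ∀ y ∈ H, x ≠ y → f s(x, y) = 1)
    {κ : Cardinal.{u}} (hκ : ℵ₀ < κ)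
    (hsucc : ∀ c < κ, Order.succ (c ⊔ ℵ₀) < κ)
    {B : Set V} (hB : #B = κ) (hdeg : ∀ x ∈ B, #(↥(B ∩ N1 f x)) < κ)
    {t : Ordinal.{u} → Cardinal.{u}} {lam : Cardinal.{u}} (hlam : lam < κ) (hlam0 : lam ≠ 0)
    (hcof : (Cardinal.ord κ).cof = lam)
    (ht_lt : ∀ o, t o < κ) (ht_cof : ∀ c < κ, ∃ o < lam.ord, c ≤ t o) :
    ∀ o < lam.ord, Good f B t κ o (stageU f B t κ o) (stage f B t κ o) := by
  intro o
  induction o using Ordinal.induction with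
  | h o ih =>
    intro ho
    have hcard : #(o.ToType) < lam := by
      rw [Cardinal.mk_toType]
      exact Cardinal.lt_ord.mp ho
    have hin : ∀ i : o.ToType, Good f B t κ
        (Ordinal.typein (· < · : o.ToType → o.ToType → Prop) i)
        (stageU f B t κ (Ordinal.typein (· < · : o.ToType → o.ToType → Prop) i))
        (stage f B t κ (Ordinal.typein (· < · : o.ToType → o.ToType → Prop) i)) := fun i =>
      ih _ (Ordinal.typein_lt_self i) ((Ordinal.typein_lt_self i).trans ho)
    have hU1 : #(↥(stageU f B t κ o)) < κ := by
      rw [stageU_eq_small]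
      refine lt_of_le_of_lt (mk_iUnion_le _) ?_
      refine mul_lt_of_lt hκ.le (hcard.trans hlam) ?_
      refine Ordinal.iSup_lt (by rw [hcof]; exact hcard) ?_
      intro i
      exact (hin i).2.2.2.2.1
    have hU2 : #(↥(nbhd f B (stageU f B t κ o))) < κ := by
      rw [nbhd_stageU]
      refine lt_of_le_of_lt (mk_iUnion_le _) ?_
      refine mul_lt_of_lt hκ.le (hcard.trans hlam) ?_
      refine Ordinal.iSup_lt (by rw [hcof]; exact hcard) ?_
      intro i
      obtain ⟨c, hc, hbound⟩ := (hin i).2.2.2.2.2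
      exact mk_nbhd_lt f B hκ.le (hin i).2.2.2.2.1 hc hbound
    have hex := exists_good f hNo hκ hsucc hB hdeg hlam hlam0 ht_lt ht_cof hU1 hU2 o
    rw [stage_eq, dif_pos hex]
    exact hex.choose_spec

end DushnikMillerAux

open DushnikMillerAux Cardinal Set in
/-- Dushnik–Miller theorem: if `κ` is an uncountable cardinal, `V` has cardinality `κ`
and `f` colors the 2-element subsets of `V` with colors `0, 1`, then either there is a
subset of `V` of cardinality `κ` monochromatic in color `0`, or a countably infinite
subset monochromatic in color `1`. -/
theorem dushnik_miller {V : Type u} (κ : Cardinal.{u}) (hκ : Cardinal.aleph0 < κ)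
    (hV : Cardinal.mk V = κ) (f : Sym2 V → Fin 2) :
    (∃ H : Set V, Cardinal.mk H = κ ∧ ∀ x ∈ H, ∀ y ∈ H, x ≠ y → f s(x, y) = 0) ∨
    (∃ H : Set V, H.Countable ∧ H.Infinite ∧
       ∀ x ∈ H, ∀ y ∈ H, x ≠ y → f s(x, y) = 1) := by
  classical
  by_cases h2 : ∃ H : Set V, H.Countable ∧ H.Infinite ∧
      ∀ x ∈ H, ∀ y ∈ H, x ≠ y → f s(x, y) = 1
  · exact Or.inr h2
  left
  have hκ0 : ℵ₀ ≤ κ := hκ.le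
  by_cases hreg : κ.IsRegular
  · obtain ⟨H, _, hHcard, hH0⟩ := regular_dm f h2 hreg univ (by rw [mk_univ, hV])
    exact ⟨H, hHcard, hH0⟩
  · -- singular case
    have hsucc : ∀ c < κ, Order.succ (c ⊔ ℵ₀) < κ := by
      intro c hc
      have h1 : c ⊔ ℵ₀ < κ := sup_lt_iff.mpr ⟨hc, hκ⟩
      rcases lt_or_eq_of_le (Order.succ_le_of_lt h1) with h | h
      · exact h
      · exact absurd (h ▸ isRegular_succ le_sup_right) hreg
    have hlamκ : (Cardinal.ord κ).cof < κ := by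
      rcases lt_or_eq_of_le ((Ordinal.cof_le_card _).trans_eq (card_ord κ)) with h | h
      · exact h
      · exact absurd ⟨hκ0, h.ge⟩ hreg
    have hlam0 : (Cardinal.ord κ).cof ≠ 0 :=
      ne_of_gt (lt_of_lt_of_le aleph0_pos
        (Ordinal.aleph0_le_cof.mpr (Cardinal.isSuccLimit_ord hκ0)))
    obtain ⟨t, ht_lt, ht_cof⟩ : ∃ t : Ordinal.{u} → Cardinal.{u}, (∀ o, t o < κ) ∧
        ∀ c < κ, ∃ o < (Cardinal.ord κ).cof.ord, c ≤ t o := by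
      obtain ⟨fs, hfs⟩ := Ordinal.exists_fundamental_sequence (Cardinal.ord κ)
      refine ⟨fun o => if h : o < (Cardinal.ord κ).cof.ord then (fs o h).card else 0, ?_, ?_⟩
      · intro o
        dsimp only
        split
        · next h => exact Cardinal.lt_ord.mp (hfs.lt h)
        · exact lt_of_lt_of_le aleph0_pos hκ0
      · intro c hc
        have h1 : c.ord < Cardinal.ord κ := Cardinal.ord_lt_ord.mpr hc
        rw [← hfs.blsub_eq] at h1
        obtain ⟨i, hi, hle⟩ := Ordinal.lt_blsub_iff.mp h1
        refine ⟨i, hi, ?_⟩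
        dsimp only
        rw [dif_pos hi]
        calc c = c.ord.card := (card_ord c).symm
          _ ≤ (fs i hi).card := Ordinal.card_le_card hle
    obtain ⟨B, -, hBcard, hBdeg⟩ := exists_small_degree f h2 univ
    rw [mk_univ, hV] at hBcard hBdeg
    have hgood := stage_good f h2 hκ hsucc hBcard hBdeg hlamκ hlam0 rfl ht_lt ht_cof
    refine ⟨stageU f B t κ (Cardinal.ord κ).cof.ord, le_antisymm (hV ▸ mk_set_le _) ?_, ?_⟩
    · -- κ ≤ #(stageU ...)
      by_contra hlt
      push_neg at hlt
      obtain ⟨o, ho, hto⟩ := ht_cof (Order.succ (#(↥(stageU f B t κ (Cardinal.ord κ).cof.ord)) ⊔ ℵ₀))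
        (hsucc _ hlt)
      have h1 : t o ≤ #(↥(stageU f B t κ (Cardinal.ord κ).cof.ord)) :=
        le_trans (hgood o ho).2.2.2.1
          (mk_le_mk_of_subset fun x hx => mem_stageU.mpr ⟨o, ho, hx⟩)
      have h2 : #(↥(stageU f B t κ (Cardinal.ord κ).cof.ord)) < Order.succ (#(↥(stageU f B t κ (Cardinal.ord κ).cof.ord)) ⊔ ℵ₀) :=
        lt_of_le_of_lt le_sup_left (Order.lt_succ_of_not_isMax (not_isMax _))
      exact absurd (hto.trans h1) (not_le.mpr h2)
    · -- 0-homogeneous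
      have cross : ∀ (a b : V) (p q : Ordinal.{u}), p < q → q < (Cardinal.ord κ).cof.ord →
          a ∈ stage f B t κ p → b ∈ stage f B t κ q → a ≠ b → f s(a, b) = 0 := by
        intro a b p q hpq hq ha hb hab
        have gq := hgood q hq
        by_contra hne
        have h1 : f s(a, b) = 1 := fin2_eq_one hne
        have hbN : b ∈ nbhd f B (stageU f B t κ q) :=
          mem_biUnion (mem_stageU.mpr ⟨p, hpq, ha⟩) ⟨gq.1 hb, hab.symm, h1⟩
        exact disjoint_left.mp gq.2.1 hb (Or.inr hbN)
      rintro x hx y hy hxy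
      obtain ⟨o1, ho1, hx1⟩ := mem_stageU.mp hx
      obtain ⟨o2, ho2, hy2⟩ := mem_stageU.mp hy
      rcases lt_trichotomy o1 o2 with h | h | h
      · exact cross x y o1 o2 h ho2 hx1 hy2 hxy
      · subst h
        exact (hgood o1 ho1).2.2.1 x hx1 y hy2 hxy
      · rw [Sym2.eq_swap]
        exact cross y x o2 o1 h ho1 hy2 hx1 hxy.symm
end

section
/- Let K be an algebraically closed field, let π be a ring automorphism of K with π ≠ id and π ∘ π = id, and let i ∈ K satisfy i² = −1. Then π(i) = −i and π(i) ≠ i. -/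
open Polynomial

/-- If `K` is an algebraically closed field, `π` is a ring automorphism of `K` with
`π ≠ id` and `π ∘ π = id`, and `i ∈ K` satisfies `i² = -1`, then `π i = -i` and
`π i ≠ i`. -/
theorem algClosed_involution_conj {K : Type*} [Field K] [IsAlgClosed K]
    (π : K ≃+* K) (hne : π ≠ RingEquiv.refl K) (hinv : ∀ x : K, π (π x) = x)
    (i : K) (hi : i ^ 2 = -1) : π i = -i ∧ π i ≠ i := by
  obtain ⟨c, hc⟩ : ∃ c : K, π c ≠ c := by
    by_contra h
    push_neg at h
    exact hne (RingEquiv.ext h)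
  by_cases h2 : (2 : K) = 0
  · -- characteristic two: derive a contradiction (Artin–Schreier style)
    exfalso
    set t : K := π c - c with htdef
    have ht : t ≠ 0 := sub_ne_zero.mpr hc
    have hπt : π t = t := by
      have h1 : π t = c - π c := by simp [htdef, map_sub, hinv]
      rw [h1]
      linear_combination (c - π c) * h2
    set d : K := c * t⁻¹ with hddef
    have hπd : π d = d + 1 := by
      have h1 : π d = π c * t⁻¹ := by rw [hddef, map_mul, map_inv₀, hπt]
      have h2' : π c = c + t := by rw [htdef]; ring
      rw [h1, h2', hddef]
      field_simp
    set a : K := d ^ 2 + d with hadef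
    have hπa : π a = a := by
      have h1 : π a = (d + 1) ^ 2 + (d + 1) := by rw [hadef, map_add, map_pow, hπd]
      rw [h1, hadef]
      linear_combination (d + 1) * h2
    obtain ⟨u, hu⟩ := IsAlgClosed.exists_root (X ^ 2 + X - C (a * d) : K[X]) (by
      have hdeg : (X ^ 2 + X - C (a * d) : K[X]).degree = 2 := by compute_degree!
      rw [hdeg]; decide)
    have hu' : u ^ 2 + u = a * d := by
      simp only [IsRoot.def, eval_sub, eval_add, eval_pow, eval_X, eval_C,
        sub_eq_zero] at hu
      exact hu
    have hπu : (π u) ^ 2 + π u = a * (d + 1) := by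
      have h1 : π (u ^ 2 + u) = π (a * d) := by rw [hu']
      rw [map_add, map_pow, map_mul, hπa, hπd] at h1
      exact h1
    set s : K := u + π u with hsdef
    have hπs : π s = s := by
      simp [hsdef, map_add, hinv, add_comm]
    have hs2 : s ^ 2 + s = a := by
      rw [hsdef]
      linear_combination hu' + hπu + (u * π u + a * d) * h2
    -- (s + d)^2 + (s + d) = 0, i.e. (s + d) * (s + d + 1) = 0
    have hsd : (s + d) * (s + d + 1) = 0 := by
      linear_combination hs2 - hadef + (s * d + a) * h2
    have hd : π d = d := by
      rcases mul_eq_zero.mp hsd with h | h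
      · have hds : d = -s := by linear_combination h
        rw [hds, map_neg, hπs]
      · have hds : d = -1 - s := by linear_combination h
        rw [hds, map_sub, map_neg, map_one, hπs]
    rw [hπd] at hd
    have : (1 : K) = 0 := by linear_combination hd
    exact one_ne_zero this
  · -- characteristic not two
    have hi0 : i ≠ 0 := by
      intro h
      rw [h] at hi
      simp at hi

    have hπi2 : (π i) ^ 2 = -1 := by
      rw [← map_pow, hi, map_neg, map_one]
    have hprod : (π i - i) * (π i + i) = 0 := by
      linear_combination hπi2 - hi
    have hne' : π i ≠ i := by
      intro hfix
      set t : K := c - π c with htdef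
      have ht : t ≠ 0 := sub_ne_zero.mpr (Ne.symm hc)
      have hπt : π t = -t := by
        have h1 : π t = π c - c := by simp [htdef, map_sub, hinv]
        rw [h1, htdef]; ring
      obtain ⟨b, hb⟩ := IsAlgClosed.exists_pow_nat_eq t (n := 2) (by norm_num)
      have hb0 : b ≠ 0 := by
        intro h
        rw [h] at hb
        simp at hb
        exact ht hb.symm
      have hπb2 : (π b) ^ 2 = (i * b) ^ 2 := by
        rw [← map_pow, hb, hπt, mul_pow, hi, ← hb]; ring
      have hfac : (π b - i * b) * (π b + i * b) = 0 := by
        linear_combination hπb2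
      have hconc : b = -b := by
        rcases mul_eq_zero.mp hfac with h | h
        · have hpb : π b = i * b := by linear_combination h
          have := hinv b
          rw [hpb, map_mul, hfix, hpb] at this
          calc b = i * (i * b) := this.symm
            _ = -b := by linear_combination b * hi
        · have hpb : π b = -(i * b) := by linear_combination h
          have := hinv b
          rw [hpb, map_neg, map_mul, hfix, hpb] at this
          calc b = -(i * -(i * b)) := this.symm
            _ = -b := by linear_combination b * hi
      have : (2 : K) * b = 0 := by linear_combination hconc
      rcases mul_eq_zero.mp this with h | h
      · exact h2 h
      · exact hb0 h
    refine ⟨?_, hne'⟩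
    rcases mul_eq_zero.mp hprod with h | h
    · exact absurd (by linear_combination h) hne'
    · linear_combination h
end
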